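/- arXiv:2108.06627 — 2 statements merged into one kernel-verified Lean document; each statement's English description precedes it below -/
import Mathlib

section
/- Let x_0 < x_1 < ... < x_n (n ≥ 1) be a partition, let β > 0 be a real constant, let f be continuously differentiable on [x_0, x_n], and let u be twice continuously differentiable on [x_0, x_n] with β·u''(x) = −f(x), u(x_0) = 0, u(x_n) = 0. Suppose c_0, ..., c_n with c_0 = c_n = 0 satisfy the Galerkin equations β·( (c_i − c_{i−1})/(x_i − x_{i−1}) − (c_{i+1} − c_i)/(x_{i+1} − x_i) ) = ∫_{x_{i−1}}^{x_{i+1}} f·φ_i for all 1 ≤ i ≤ n−1, where φ_i is the hat function at x_i. Define, for x in [x_k, x_{k+1}], u_h^{new}(x) = c_k·(x_{k+1}−x)/(x_{k+1}−x_k) + c_{k+1}·(x−x_k)/(x_{k+1}−x_k) − (1/(2β))(x−x_k)(x−x_{k+1})·f(x). Then u_h^{new}(x_k) = u(x_k) for every node x_k, and for every k and every x in [x_k, x_{k+1}], |u(x) − u_h^{new}(x)| ≤ (h^3/(8β)) · sup_{t∈[x_0,x_n]} |f'(t)|, where h = max_k (x_{k+1} − x_k). -/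
/-- The hat (piecewise linear) basis function associated with the nodes `xm < xc < xp`:
it equals `(t−xm)/(xc−xm)` on `[xm,xc]`, `(xp−t)/(xp−xc)` on `[xc,xp]`, and `0` otherwise. -/
noncomputable def hatFun (xm xc xp : ℝ) (t : ℝ) : ℝ :=
  if t ∈ Set.Icc xm xc then (t - xm) / (xc - xm)
  else if t ∈ Set.Icc xc xp then (xp - t) / (xp - xc)
  else 0

open Set MeasureTheory intervalIntegral

/-!
In one dimension the `P₁` Galerkin solution is exact at the nodes: integrating `β u'' = -f`
against the hat function at `x i` gives `β` times the jump of the difference quotients of `u`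
at `x i`, so the nodal errors `c k - u (x k)` have constant difference quotients and vanish
with their boundary values.

On an element `[a, b]`, Rolle's theorem applied twice to `u` minus its quadratic interpolant at
`a, t, b` gives `u t - L t = (t - a) (t - b) u'' ξ / 2 = -(t - a) (t - b) f ξ / (2 β)` for the
linear interpolant `L`. The corrected solution therefore has error
`(t - a) (t - b) (f t - f ξ) / (2 β)`, which is at most `(h² / 4) · h sup |f'| / (2 β)`.
-/

theorem exists_hasDerivAt_hasDerivAt_eq_zero {F F' F'' : ℝ → ℝ} {a t b : ℝ}
    (hat : a < t) (htb : t < b) (hF : ContinuousOn F (Icc a b))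
    (hF' : ∀ s ∈ Ioo a b, HasDerivAt F (F' s) s) (hF'' : ∀ s ∈ Ioo a b, HasDerivAt F' (F'' s) s)
    (ha : F a = 0) (ht : F t = 0) (hb : F b = 0) : ∃ ξ ∈ Ioo a b, F'' ξ = 0 := by
  obtain ⟨ξ₁, hξ₁, hF'ξ₁⟩ := exists_hasDerivAt_eq_zero hat
    (hF.mono (Icc_subset_Icc_right htb.le)) (ha.trans ht.symm)
    fun s hs => hF' s ⟨hs.1, hs.2.trans htb⟩
  obtain ⟨ξ₂, hξ₂, hF'ξ₂⟩ := exists_hasDerivAt_eq_zero htb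
    (hF.mono (Icc_subset_Icc_left hat.le)) (ht.trans hb.symm)
    fun s hs => hF' s ⟨hat.trans hs.1, hs.2⟩
  have hsub : Icc ξ₁ ξ₂ ⊆ Ioo a b := Icc_subset_Ioo hξ₁.1 hξ₂.2
  obtain ⟨ξ, hξ, hF''ξ⟩ := exists_hasDerivAt_eq_zero (hξ₁.2.trans hξ₂.1)
    (fun s hs => (hF'' s (hsub hs)).continuousAt.continuousWithinAt) (hF'ξ₁.trans hF'ξ₂.symm)
    fun s hs => hF'' s (hsub (Ioo_subset_Icc_self hs))
  exact ⟨ξ, hsub (Ioo_subset_Icc_self hξ), hF''ξ⟩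

theorem exists_sub_linearInterp_eq {g g' g'' : ℝ → ℝ} {a b t : ℝ} (hab : a < b) (ht : t ∈ Icc a b)
    (hg : ContinuousOn g (Icc a b)) (hg' : ∀ s ∈ Ioo a b, HasDerivAt g (g' s) s)
    (hg'' : ∀ s ∈ Ioo a b, HasDerivAt g' (g'' s) s) :
    ∃ ξ ∈ Ioo a b, g t - (g a * (b - t) / (b - a) + g b * (t - a) / (b - a))
      = (t - a) * (t - b) / 2 * g'' ξ := by
  have hba : b - a ≠ 0 := (sub_pos.2 hab).ne'
  have hmid : (a + b) / 2 ∈ Ioo a b := ⟨by linarith, by linarith⟩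
  rcases ht.1.eq_or_lt with rfl | hat
  · exact ⟨_, hmid, by field_simp; ring⟩
  rcases ht.2.eq_or_lt with rfl | htb
  · exact ⟨_, hmid, by field_simp; ring⟩
  -- `q` is the quadratic interpolating `g` at `a`, `t`, `b`; its leading coefficient is `K`.
  set K := (g t - (g a * (b - t) / (b - a) + g b * (t - a) / (b - a))) / ((t - a) * (t - b))
  set q : ℝ → ℝ := fun s => g a + (g b - g a) / (b - a) * (s - a) + K * ((s - a) * (s - b))
  have hq : ∀ s, HasDerivAt q ((g b - g a) / (b - a) + K * (2 * s - a - b)) s := fun s => by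
    have := (((hasDerivAt_id s).sub_const a).const_mul ((g b - g a) / (b - a))).const_add (g a)
      |>.add ((((hasDerivAt_id s).sub_const a).mul ((hasDerivAt_id s).sub_const b)).const_mul K)
    exact this.congr_deriv (by simp only [id]; ring)
  have hq' : ∀ s, HasDerivAt (fun s => (g b - g a) / (b - a) + K * (2 * s - a - b)) (2 * K) s :=
    fun s => by
      have := ((((hasDerivAt_id s).const_mul 2).sub_const a).sub_const b).const_mul K
        |>.const_add ((g b - g a) / (b - a))
      exact this.congr_deriv (by ring)
  have hKt : K * ((t - a) * (t - b)) = g t - (g a * (b - t) / (b - a) + g b * (t - a) / (b - a)) :=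
    div_mul_cancel₀ _ (mul_ne_zero (sub_pos.2 hat).ne' (sub_neg.2 htb).ne)
  obtain ⟨ξ, hξ, hξK⟩ := exists_hasDerivAt_hasDerivAt_eq_zero (F := fun s => g s - q s) hat htb
    (hg.sub (by fun_prop)) (fun s hs => (hg' s hs).sub (hq s)) (fun s hs => (hg'' s hs).sub (hq' s))
    (by simp [q]) (by simp only [q]; rw [hKt]; field_simp; ring) (by simp [q]; field_simp; ring)
  refine ⟨ξ, hξ, ?_⟩
  rw [show g'' ξ = 2 * K by linarith, ← hKt]
  ring

section IntegralIdentities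

variable {u u' u'' : ℝ → ℝ} {p q : ℝ}

theorem integral_mul_sub_left_eq (hpq : p ≤ q) (hu : ContinuousOn u (Icc p q))
    (hu' : ContinuousOn u' (Icc p q)) (hderiv : ∀ s ∈ Ioo p q, HasDerivAt u (u' s) s)
    (hderiv' : ∀ s ∈ Ioo p q, HasDerivAt u' (u'' s) s) (hint : IntervalIntegrable u'' volume p q) :
    ∫ t in p..q, u'' t * (t - p) = u' q * (q - p) - (u q - u p) := by
  have := integral_eq_sub_of_hasDerivAt_of_le
    (f := fun s => u' s * (s - p) - u s) (f' := fun t => u'' t * (t - p)) hpq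
    ((hu'.mul (continuousOn_id.sub continuousOn_const)).sub hu)
    (fun s hs => (((hderiv' s hs).mul ((hasDerivAt_id s).sub_const p)).sub
      (hderiv s hs)).congr_deriv (by simp only [id]; ring))
    (hint.mul_continuousOn (by fun_prop))
  rw [this]
  ring

theorem integral_mul_sub_right_eq (hpq : p ≤ q) (hu : ContinuousOn u (Icc p q))
    (hu' : ContinuousOn u' (Icc p q)) (hderiv : ∀ s ∈ Ioo p q, HasDerivAt u (u' s) s)
    (hderiv' : ∀ s ∈ Ioo p q, HasDerivAt u' (u'' s) s) (hint : IntervalIntegrable u'' volume p q) :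
    ∫ t in p..q, u'' t * (q - t) = u q - u p - u' p * (q - p) := by
  have := integral_eq_sub_of_hasDerivAt_of_le
    (f := fun s => u' s * (q - s) + u s) (f' := fun t => u'' t * (q - t)) hpq
    ((hu'.mul (continuousOn_const.sub continuousOn_id)).add hu)
    (fun s hs => (((hderiv' s hs).mul ((hasDerivAt_id s).const_sub q)).add
      (hderiv s hs)).congr_deriv (by simp only [id]; ring))
    (hint.mul_continuousOn (by fun_prop))
  rw [this]
  ring

end IntegralIdentities

theorem hatFun_eqOn_left {a m : ℝ} (b : ℝ) :
    EqOn (hatFun a m b) (fun t => (t - a) / (m - a)) (Icc a m) := fun t ht => by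
  simp only [hatFun, if_pos ht]

theorem hatFun_eqOn_right {a m b : ℝ} (ham : a < m) (hmb : m < b) :
    EqOn (hatFun a m b) (fun t => (b - t) / (b - m)) (Icc m b) := fun t ht => by
  by_cases hl : t ∈ Icc a m
  · obtain rfl : t = m := le_antisymm hl.2 ht.1
    simp only [hatFun, if_pos hl, div_self (sub_pos.2 ham).ne', div_self (sub_pos.2 hmb).ne']
  · simp only [hatFun, if_neg hl, if_pos ht]

theorem integral_mul_hatFun {u u' u'' : ℝ → ℝ} {a m b : ℝ} (ham : a < m) (hmb : m < b)
    (hu : ContinuousOn u (Icc a b)) (hu' : ContinuousOn u' (Icc a b))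
    (hderiv : ∀ s ∈ Ioo a b, HasDerivAt u (u' s) s)
    (hderiv' : ∀ s ∈ Ioo a b, HasDerivAt u' (u'' s) s) (hint : IntervalIntegrable u'' volume a b) :
    ∫ t in a..b, u'' t * hatFun a m b t = (u b - u m) / (b - m) - (u m - u a) / (m - a) := by
  have hl : EqOn (hatFun a m b) (fun t => (t - a) / (m - a)) (uIcc a m) := by
    rw [uIcc_of_le ham.le]; exact hatFun_eqOn_left b
  have hr : EqOn (hatFun a m b) (fun t => (b - t) / (b - m)) (uIcc m b) := by
    rw [uIcc_of_le hmb.le]; exact hatFun_eqOn_right ham hmb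
  have hsubl : Icc a m ⊆ Icc a b := Icc_subset_Icc_right hmb.le
  have hsubr : Icc m b ⊆ Icc a b := Icc_subset_Icc_left ham.le
  have hintl : IntervalIntegrable u'' volume a m := hint.mono_set (by
    rw [uIcc_of_le ham.le, uIcc_of_le (ham.trans hmb).le]; exact hsubl)
  have hintr : IntervalIntegrable u'' volume m b := hint.mono_set (by
    rw [uIcc_of_le hmb.le, uIcc_of_le (ham.trans hmb).le]; exact hsubr)
  rw [← integral_add_adjacent_intervals
      (hintl.mul_continuousOn ((by fun_prop : ContinuousOn _ _).congr hl))
      (hintr.mul_continuousOn ((by fun_prop : ContinuousOn _ _).congr hr)),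
    integral_congr fun t ht => congrArg (u'' t * ·) (hl ht),
    integral_congr fun t ht => congrArg (u'' t * ·) (hr ht)]
  simp only [mul_div_assoc', intervalIntegral.integral_div]
  rw [integral_mul_sub_left_eq ham.le (hu.mono hsubl) (hu'.mono hsubl)
      (fun s hs => hderiv s (Ioo_subset_Ioo_right hmb.le hs))
      (fun s hs => hderiv' s (Ioo_subset_Ioo_right hmb.le hs)) hintl,
    integral_mul_sub_right_eq hmb.le (hu.mono hsubr) (hu'.mono hsubr)
      (fun s hs => hderiv s (Ioo_subset_Ioo_left ham.le hs))
      (fun s hs => hderiv' s (Ioo_subset_Ioo_left ham.le hs)) hintr]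
  field_simp [(sub_pos.2 ham).ne', (sub_pos.2 hmb).ne']
  ring

theorem eq_zero_of_slope_eq {n : ℕ} {x e : ℕ → ℝ} (hx : ∀ i < n, x i < x (i + 1))
    (h0 : e 0 = 0) (hn : e n = 0)
    (hslope : ∀ i, 1 ≤ i → i + 1 ≤ n →
      (e (i + 1) - e i) / (x (i + 1) - x i) = (e i - e (i - 1)) / (x i - x (i - 1))) :
    ∀ k ≤ n, e k = 0 := by
  set d := (e 1 - e 0) / (x 1 - x 0)
  have hd : ∀ j, j + 1 ≤ n → (e (j + 1) - e j) / (x (j + 1) - x j) = d := by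
    intro j
    induction j with
    | zero => intro _; rfl
    | succ j ih =>
      intro hj
      rw [hslope (j + 1) (by omega) hj, Nat.add_sub_cancel, ih (by omega)]
  have haffine : ∀ k ≤ n, e k = d * (x k - x 0) := by
    intro k
    induction k with
    | zero => intro _; rw [h0, sub_self, mul_zero]
    | succ k ih =>
      intro hk
      have := hd k hk
      rw [div_eq_iff (sub_pos.2 (hx k hk)).ne', ih (by omega)] at this
      linarith
  rcases n.eq_zero_or_pos with rfl | hpos
  · intro k hk
    rwa [Nat.le_zero.1 hk]
  have hxn : x 0 < x n := strictMonoOn_Iic_of_lt_succ (fun m hm => by simpa using hx m hm)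
    (by simp) (by simp) hpos
  have hd0 : d = 0 := by
    have := haffine n le_rfl
    rw [hn, eq_comm, mul_eq_zero] at this
    exact this.resolve_right (sub_pos.2 hxn).ne'
  intro k hk
  rw [haffine k hk, hd0, zero_mul]

noncomputable def correctedInterp (β : ℝ) (f : ℝ → ℝ) (a b ca cb t : ℝ) : ℝ :=
  ca * (b - t) / (b - a) + cb * (t - a) / (b - a) - 1 / (2 * β) * (t - a) * (t - b) * f t

section CorrectedInterp

variable {β : ℝ} {f : ℝ → ℝ} {a b ca cb : ℝ}

theorem correctedInterp_left (hab : a ≠ b) : correctedInterp β f a b ca cb a = ca := by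
  have := sub_ne_zero.2 hab.symm
  simp only [correctedInterp]
  field_simp
  ring

theorem correctedInterp_right (hab : a ≠ b) : correctedInterp β f a b ca cb b = cb := by
  have := sub_ne_zero.2 hab.symm
  simp only [correctedInterp]
  field_simp
  ring

end CorrectedInterp

theorem abs_sub_correctedInterp_le {u u' u'' f f' : ℝ → ℝ} {β a b M t : ℝ} (hβ : 0 < β)
    (hab : a < b) (ht : t ∈ Icc a b) (hu : ContinuousOn u (Icc a b))
    (hu' : ∀ s ∈ Ioo a b, HasDerivAt u (u' s) s) (hu'' : ∀ s ∈ Ioo a b, HasDerivAt u' (u'' s) s)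
    (hode : ∀ s ∈ Ioo a b, β * u'' s = -f s)
    (hf : ∀ s ∈ Icc a b, HasDerivWithinAt f (f' s) (Icc a b) s) (hM : ∀ s ∈ Icc a b, |f' s| ≤ M) :
    |u t - correctedInterp β f a b (u a) (u b) t| ≤ (b - a) ^ 3 / (8 * β) * M := by
  obtain ⟨ξ, hξ, hinterp⟩ := exists_sub_linearInterp_eq hab ht hu hu' hu''
  have hM0 : 0 ≤ M := (abs_nonneg _).trans (hM a (left_mem_Icc.2 hab.le))
  have hlip : |f t - f ξ| ≤ M * (b - a) := by
    have := (convex_Icc a b).norm_image_sub_le_of_norm_hasDerivWithin_le hf hM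
      (Ioo_subset_Icc_self hξ) ht
    simp only [Real.norm_eq_abs] at this
    refine this.trans (mul_le_mul_of_nonneg_left ?_ hM0)
    rw [abs_le]
    constructor <;> linarith [ht.1, ht.2, hξ.1, hξ.2]
  have hquad : |(t - a) * (t - b)| ≤ (b - a) ^ 2 / 4 := by
    rw [abs_le]
    constructor <;> nlinarith [ht.1, ht.2, sq_nonneg (2 * t - a - b)]
  have herr : u t - correctedInterp β f a b (u a) (u b) t
      = (t - a) * (t - b) / (2 * β) * (f t - f ξ) := by
    have hu''ξ : u'' ξ = -f ξ / β := by rw [eq_div_iff hβ.ne', mul_comm, hode ξ hξ]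
    unfold correctedInterp
    linear_combination hinterp + (t - a) * (t - b) / 2 * hu''ξ
  rw [herr, abs_mul, abs_div, abs_of_pos (by positivity : 0 < 2 * β)]
  calc |(t - a) * (t - b)| / (2 * β) * |f t - f ξ|
      ≤ (b - a) ^ 2 / 4 / (2 * β) * (M * (b - a)) := by gcongr
    _ = (b - a) ^ 3 / (8 * β) * M := by ring

theorem integral_mul_hatFun_of_ode {u u' u'' f : ℝ → ℝ} {β a m b : ℝ} (ham : a < m) (hmb : m < b)
    (hu : ContinuousOn u (Icc a b)) (hu' : ContinuousOn u' (Icc a b))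
    (hu'' : ContinuousOn u'' (Icc a b)) (hderiv : ∀ s ∈ Ioo a b, HasDerivAt u (u' s) s)
    (hderiv' : ∀ s ∈ Ioo a b, HasDerivAt u' (u'' s) s) (hode : ∀ t ∈ Icc a b, β * u'' t = -f t) :
    ∫ t in a..b, f t * hatFun a m b t = β * ((u m - u a) / (m - a) - (u b - u m) / (b - m)) := by
  have hab : a ≤ b := (ham.trans hmb).le
  have := integral_mul_hatFun ham hmb hu hu' hderiv hderiv' (hu''.intervalIntegrable_of_Icc hab)
  rw [show β * ((u m - u a) / (m - a) - (u b - u m) / (b - m)) = -β * ((u b - u m) / (b - m)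
    - (u m - u a) / (m - a)) by ring, ← this, ← intervalIntegral.integral_const_mul]
  refine integral_congr fun t ht => ?_
  rw [uIcc_of_le hab] at ht
  simp only [← mul_assoc, neg_mul, hode t ht, neg_neg]

theorem mem_Icc_of_lt_succ {n : ℕ} {x : ℕ → ℝ} (hx : ∀ i < n, x i < x (i + 1)) {k : ℕ}
    (hk : k ≤ n) : x k ∈ Icc (x 0) (x n) :=
  have hmono := (strictMonoOn_Iic_of_lt_succ fun m hm => by simpa using hx m hm).monotoneOn
  ⟨hmono (by simp) (by simpa) (Nat.zero_le k), hmono (by simpa) (by simp) hk⟩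

theorem galerkin_coeff_eq_nodal_value {n : ℕ} {x c : ℕ → ℝ} {β : ℝ} {f u u' u'' : ℝ → ℝ}
    (hx : ∀ i < n, x i < x (i + 1)) (hβ : β ≠ 0)
    (hu : ContinuousOn u (Icc (x 0) (x n))) (hu' : ContinuousOn u' (Icc (x 0) (x n)))
    (hu'' : ContinuousOn u'' (Icc (x 0) (x n)))
    (hderiv : ∀ s ∈ Ioo (x 0) (x n), HasDerivAt u (u' s) s)
    (hderiv' : ∀ s ∈ Ioo (x 0) (x n), HasDerivAt u' (u'' s) s)
    (hode : ∀ t ∈ Icc (x 0) (x n), β * u'' t = -f t)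
    (h0 : c 0 = u (x 0)) (hn : c n = u (x n))
    (hgal : ∀ i, 1 ≤ i → i ≤ n - 1 →
      β * ((c i - c (i - 1)) / (x i - x (i - 1)) - (c (i + 1) - c i) / (x (i + 1) - x i))
        = ∫ t in (x (i - 1))..(x (i + 1)), f t * hatFun (x (i - 1)) (x i) (x (i + 1)) t) :
    ∀ k ≤ n, c k = u (x k) := by
  have key := eq_zero_of_slope_eq hx (e := fun k => c k - u (x k)) (sub_eq_zero.2 h0)
    (sub_eq_zero.2 hn) fun i hi1 hin => by
      have ham : x (i - 1) < x i := Nat.sub_add_cancel hi1 ▸ hx (i - 1) (by omega)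
      have hmb : x i < x (i + 1) := hx i (by omega)
      have hl := mem_Icc_of_lt_succ hx (k := i - 1) (by omega)
      have hr := mem_Icc_of_lt_succ hx hin
      have hsub := Icc_subset_Icc hl.1 hr.2
      have hsub' := Ioo_subset_Ioo hl.1 hr.2
      have hgal_i := hgal i hi1 (by omega)
      rw [integral_mul_hatFun_of_ode ham hmb (hu.mono hsub) (hu'.mono hsub) (hu''.mono hsub)
        (fun s hs => hderiv s (hsub' hs)) (fun s hs => hderiv' s (hsub' hs))
        (fun t ht => hode t (hsub ht))] at hgal_i
      apply mul_left_cancel₀ hβ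
      linear_combination -hgal_i
  exact fun k hk => sub_eq_zero.1 (key k hk)

/-- The posterior-corrected `P₁` finite element solution
`u_h^{new}(x) = c_k (x_{k+1}−x)/(x_{k+1}−x_k) + c_{k+1} (x−x_k)/(x_{k+1}−x_k)
  − (1/(2β))(x−x_k)(x−x_{k+1}) f x` on each element `[x_k, x_{k+1}]`
is exact at the nodes, and satisfies the third-order pointwise bound
`|u x − u_h^{new} x| ≤ (h³/(8β)) sup |f'|` where `h` is the mesh size. -/
theorem posterior_corrected_fem_third_order_pointwise
    (n : ℕ) (hn : 1 ≤ n) (x : ℕ → ℝ) (hx : ∀ i < n, x i < x (i + 1))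
    (β : ℝ) (hβ : 0 < β) (f f' u u' u'' : ℝ → ℝ)
    (hf' : ∀ t ∈ Set.Icc (x 0) (x n), HasDerivWithinAt f (f' t) (Set.Icc (x 0) (x n)) t)
    (hf'c : ContinuousOn f' (Set.Icc (x 0) (x n)))
    (hu' : ∀ t ∈ Set.Icc (x 0) (x n), HasDerivWithinAt u (u' t) (Set.Icc (x 0) (x n)) t)
    (hu'' : ∀ t ∈ Set.Icc (x 0) (x n), HasDerivWithinAt u' (u'' t) (Set.Icc (x 0) (x n)) t)
    (hu''c : ContinuousOn u'' (Set.Icc (x 0) (x n)))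
    (hode : ∀ t ∈ Set.Icc (x 0) (x n), β * u'' t = -f t)
    (hu0 : u (x 0) = 0) (hun : u (x n) = 0)
    (c : ℕ → ℝ) (hc0 : c 0 = 0) (hcn : c n = 0)
    (hgal : ∀ i, 1 ≤ i → i ≤ n - 1 →
      β * ((c i - c (i - 1)) / (x i - x (i - 1)) - (c (i + 1) - c i) / (x (i + 1) - x i))
        = ∫ t in (x (i - 1))..(x (i + 1)), f t * hatFun (x (i - 1)) (x i) (x (i + 1)) t)
    (uhnew : ℝ → ℝ)
    (huh : ∀ k < n, ∀ t ∈ Set.Icc (x k) (x (k + 1)),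
      uhnew t = c k * (x (k + 1) - t) / (x (k + 1) - x k)
        + c (k + 1) * (t - x k) / (x (k + 1) - x k)
        - 1 / (2 * β) * (t - x k) * (t - x (k + 1)) * f t)
    (H : ℝ)
    (hH : H = (Finset.range n).sup' (Finset.nonempty_range_iff.mpr (by omega))
      (fun k => x (k + 1) - x k)) :
    (∀ k ≤ n, uhnew (x k) = u (x k)) ∧
    (∀ k < n, ∀ t ∈ Set.Icc (x k) (x (k + 1)),
      |u t - uhnew t| ≤ H ^ 3 / (8 * β) * ⨆ s : Set.Icc (x 0) (x n), |f' s|) := by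
  have hderiv s (hs : s ∈ Ioo (x 0) (x n)) : HasDerivAt u (u' s) s :=
    (hu' s (Ioo_subset_Icc_self hs)).hasDerivAt (Icc_mem_nhds hs.1 hs.2)
  have hderiv' s (hs : s ∈ Ioo (x 0) (x n)) : HasDerivAt u' (u'' s) s :=
    (hu'' s (Ioo_subset_Icc_self hs)).hasDerivAt (Icc_mem_nhds hs.1 hs.2)
  have hucont : ContinuousOn u (Icc (x 0) (x n)) := fun s hs => (hu' s hs).continuousWithinAt
  have hnode := galerkin_coeff_eq_nodal_value hx hβ.ne' hucont
    (fun s hs => (hu'' s hs).continuousWithinAt) hu''c hderiv hderiv' hode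
    (hc0.trans hu0.symm) (hcn.trans hun.symm) hgal
  refine ⟨fun k hk => ?_, fun k hk t ht => ?_⟩
  · rcases hk.lt_or_eq with hk | rfl
    · rw [huh k hk _ (left_mem_Icc.2 (hx k hk).le)]
      exact (correctedInterp_left (hx k hk).ne).trans (hnode k hk.le)
    · obtain ⟨j, rfl⟩ : ∃ j, k = j + 1 := ⟨k - 1, by omega⟩
      rw [huh j (by omega) _ (right_mem_Icc.2 (hx j (by omega)).le)]
      exact (correctedInterp_right (hx j (by omega)).ne).trans (hnode (j + 1) le_rfl)
  · have hl := mem_Icc_of_lt_succ hx hk.le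
    have hr := mem_Icc_of_lt_succ hx hk
    have hsub := Icc_subset_Icc hl.1 hr.2
    have hsub' := Ioo_subset_Ioo hl.1 hr.2
    have hbdd := (isCompact_Icc.image_of_continuousOn hf'c.abs).bddAbove
    have hmesh : x (k + 1) - x k ≤ H :=
      hH ▸ Finset.le_sup' (fun i => x (i + 1) - x i) (Finset.mem_range.2 hk)
    rw [huh k hk t ht, hnode k hk.le, hnode (k + 1) hk]
    refine (abs_sub_correctedInterp_le hβ (hx k hk) ht (hucont.mono hsub)
      (fun s hs => hderiv s (hsub' hs)) (fun s hs => hderiv' s (hsub' hs))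
      (fun s hs => hode s (hsub (Ioo_subset_Icc_self hs)))
      (fun s hs => (hf' s (hsub hs)).mono hsub) fun s hs => le_ciSup_set hbdd (hsub hs)).trans ?_
    have := (sub_pos.2 (hx k hk)).le
    have := (abs_nonneg _).trans (le_ciSup_set hbdd hl)
    gcongr
end

section
/- Let a < b, let β be continuously differentiable on [a,b] with β(x) ≥ β_0 > 0 for all x, let q and f be continuous on [a,b], and let u be three times continuously differentiable on [a,b] satisfying β(x)·u''(x) + β'(x)·u'(x) − q(x)·u(x) + f(x) = 0 for all x in [a,b]. Define v(x) = u_I(x) − (β'(x)/(2β(x)))·(x−a)(x−b)·(u(b)−u(a))/(b−a) + (q(x)/(2β(x)))·(x−a)(x−b)·u_I(x) − (f(x)/(2β(x)))·(x−a)(x−b), where u_I is the linear interpolant of u on [a,b]. Then for every x in [a,b], |u(x) − v(x)| ≤ ((b−a)^3/8)·( sup_{[a,b]}|u'''| + (sup_{[a,b]}|β'|/β_0)·sup_{[a,b]}|u''| ) + ((b−a)^4/64)·(sup_{[a,b]}|q|/β_0)·sup_{[a,b]}|u''|. -/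
/-!
Substituting `f` from the differential equation at `x` splits the error as
`u - v = (u - u_I - (x-a)(x-b)/2 · u''(x))
  + (x-a)(x-b)/(2β) · (q (u - u_I) - β' (u' - (u b - u a)/(b-a)))`.
Expanding `u a` and `u b` by Taylor's formula at `x`, the first bracket is the linear interpolant
of the quadratic Taylor remainders, hence `O(h³ sup|u'''|)`, while `u - u_I = O(h² sup|u''|)`
and `u' - (u b - u a)/(b-a) = O(h sup|u''|)` come from the linear remainders; the bubble factor
`(x-a)(x-b)/(2β)` is at most `h²/(8β₀)` in absolute value, where `h = b - a`.
-/

open Set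

theorem abs_le_of_abs_deriv_le_pow_of_le {F F' : ℝ → ℝ} {x y C : ℝ} {n : ℕ} (hxy : x ≤ y)
    (hF : ∀ t ∈ Icc x y, HasDerivWithinAt F (F' t) (Icc x y) t) (hFx : F x = 0)
    (hF' : ∀ t ∈ Icc x y, |F' t| ≤ C * |t - x| ^ n) :
    |F y| ≤ C * |y - x| ^ (n + 1) / (n + 1) := by
  have hB : ∀ t, HasDerivAt (fun t => C * (t - x) ^ (n + 1) / (n + 1)) (C * (t - x) ^ n) t := by
    intro t
    refine ((((hasDerivAt_id' t).sub_const x).pow (n + 1)).const_mul C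
      |>.div_const _).congr_deriv ?_
    field_simp
    push_cast
    ring
  have := image_norm_le_of_norm_deriv_right_le_deriv_boundary
    (fun t ht => (hF t ht).continuousWithinAt)
    (fun t ht => (hF t (Ico_subset_Icc_self ht)).mono_of_mem_nhdsWithin (Icc_mem_nhdsGE_of_mem ht))
    (by simp [hFx]) hB
    (fun t ht => by simpa [abs_of_nonneg (sub_nonneg.2 ht.1)] using hF' t (Ico_subset_Icc_self ht))
    (right_mem_Icc.2 hxy)
  simpa [abs_of_nonneg (sub_nonneg.2 hxy)] using this

theorem abs_le_of_abs_deriv_le_pow {F F' : ℝ → ℝ} {x y C : ℝ} {n : ℕ}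
    (hF : ∀ t ∈ uIcc x y, HasDerivWithinAt F (F' t) (uIcc x y) t) (hFx : F x = 0)
    (hF' : ∀ t ∈ uIcc x y, |F' t| ≤ C * |t - x| ^ n) :
    |F y| ≤ C * |y - x| ^ (n + 1) / (n + 1) := by
  rcases le_total x y with hxy | hyx
  · rw [uIcc_of_le hxy] at hF hF'
    exact abs_le_of_abs_deriv_le_pow_of_le hxy hF hFx hF'
  · rw [uIcc_of_ge hyx] at hF hF'
    have hneg : MapsTo (fun t : ℝ => -t) (Icc (-x) (-y)) (Icc y x) := fun t ht =>
      ⟨le_neg.1 ht.2, neg_le.1 ht.1⟩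
    have := abs_le_of_abs_deriv_le_pow_of_le (F := fun t => F (-t)) (F' := fun t => -F' (-t))
      (C := C) (n := n) (neg_le_neg hyx)
      (fun t ht => by
        simpa [Function.comp_def] using
          (hF (-t) (hneg ht)).comp t (hasDerivWithinAt_id t _).neg hneg)
      (by simpa using hFx)
      (fun t ht => by
        rw [abs_neg, show t - -x = -(-t - x) by ring, abs_neg]
        exact hF' (-t) (hneg ht))
    rwa [neg_neg, show -y - -x = -(y - x) by ring, abs_neg] at this

section Taylor

variable {s : Set ℝ} [hs : s.OrdConnected] {u u' u'' u''' : ℝ → ℝ} {x y M : ℝ}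

theorem abs_taylor_remainder₁_le (hu : ∀ t ∈ s, HasDerivWithinAt u (u' t) s t)
    (hu' : ∀ t ∈ s, HasDerivWithinAt u' (u'' t) s t) (hM : ∀ t ∈ s, |u'' t| ≤ M)
    (hx : x ∈ s) (hy : y ∈ s) :
    |u y - u x - u' x * (y - x)| ≤ M * (y - x) ^ 2 / 2 := by
  have hxy := hs.uIcc_subset hx hy
  have key := abs_le_of_abs_deriv_le_pow (F := fun t => u t - u x - u' x * (t - x))
    (F' := fun t => u' t - u' x) (C := M) (n := 1)
    (fun t ht => by
      refine ((((hu t (hxy ht)).mono hxy).sub_const _).sub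
        ((((hasDerivAt_id' t).sub_const x |>.hasDerivWithinAt).const_mul (u' x)))).congr_deriv ?_
      ring)
    (by simp)
    (fun t ht => by
      simpa using hs.convex.norm_image_sub_le_of_norm_hasDerivWithin_le hu' hM hx (hxy ht))
  norm_num at key
  exact key

theorem abs_taylor_remainder₂_le (hu : ∀ t ∈ s, HasDerivWithinAt u (u' t) s t)
    (hu' : ∀ t ∈ s, HasDerivWithinAt u' (u'' t) s t)
    (hu'' : ∀ t ∈ s, HasDerivWithinAt u'' (u''' t) s t) (hM : ∀ t ∈ s, |u''' t| ≤ M)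
    (hx : x ∈ s) (hy : y ∈ s) :
    |u y - u x - u' x * (y - x) - u'' x * (y - x) ^ 2 / 2| ≤ M * |y - x| ^ 3 / 6 := by
  have hxy := hs.uIcc_subset hx hy
  have key := abs_le_of_abs_deriv_le_pow
    (F := fun t => u t - u x - u' x * (t - x) - u'' x * (t - x) ^ 2 / 2)
    (F' := fun t => u' t - u' x - u'' x * (t - x)) (C := M / 2) (n := 2)
    (fun t ht => by
      refine (((((hu t (hxy ht)).mono hxy).sub_const _).sub
        ((((hasDerivAt_id' t).sub_const x |>.hasDerivWithinAt).const_mul (u' x)))).sub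
        (((((hasDerivAt_id' t).sub_const x |>.hasDerivWithinAt).pow 2).const_mul (u'' x)).div_const
          2)).congr_deriv ?_
      ring)
    (by simp)
    (fun t ht => by
      rw [sq_abs]
      linarith [abs_taylor_remainder₁_le hu' hu'' hM hx (hxy ht)])
  norm_num at key
  linarith

end Taylor

noncomputable def linInterp (u : ℝ → ℝ) (a b x : ℝ) : ℝ :=
  u a * (b - x) / (b - a) + u b * (x - a) / (b - a)

noncomputable def modifiedInterp (β β' q f u : ℝ → ℝ) (a b x : ℝ) : ℝ :=
  linInterp u a b x
    - β' x / (2 * β x) * (x - a) * (x - b) * ((u b - u a) / (b - a))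
    + q x / (2 * β x) * (x - a) * (x - b) * linInterp u a b x
    - f x / (2 * β x) * (x - a) * (x - b)

section Interpolation

variable {a b x M : ℝ} {u u' u'' u''' : ℝ → ℝ}

theorem abs_sub_linInterp_le (hab : a < b) (hx : x ∈ Icc a b)
    (hu : ∀ t ∈ Icc a b, HasDerivWithinAt u (u' t) (Icc a b) t)
    (hu' : ∀ t ∈ Icc a b, HasDerivWithinAt u' (u'' t) (Icc a b) t)
    (hM : ∀ t ∈ Icc a b, |u'' t| ≤ M) :
    |u x - linInterp u a b x| ≤ M * (b - a) ^ 2 / 8 := by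
  have hSa := abs_taylor_remainder₁_le hu hu' hM hx (left_mem_Icc.2 hab.le)
  have hSb := abs_taylor_remainder₁_le hu hu' hM hx (right_mem_Icc.2 hab.le)
  have hM0 : 0 ≤ M := (abs_nonneg _).trans (hM x hx)
  have hp : 0 ≤ x - a := sub_nonneg.2 hx.1
  have hr : 0 ≤ b - x := sub_nonneg.2 hx.2
  have hba : 0 < b - a := sub_pos.2 hab
  have key : u x - linInterp u a b x = -((b - x) * (u a - u x - u' x * (a - x))
      + (x - a) * (u b - u x - u' x * (b - x))) / (b - a) := by
    unfold linInterp; field_simp; ring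
  rw [key, abs_div, abs_neg, abs_of_pos hba, div_le_iff₀ hba]
  calc _ ≤ (b - x) * (M * (a - x) ^ 2 / 2) + (x - a) * (M * (b - x) ^ 2 / 2) := by
        refine (abs_add_le _ _).trans ?_
        rw [abs_mul, abs_mul, abs_of_nonneg hp, abs_of_nonneg hr]
        gcongr
    _ ≤ M * (b - a) ^ 2 / 8 * (b - a) := by
        nlinarith [mul_nonneg (mul_nonneg hM0 hba.le) (sq_nonneg (x - a - (b - x)))]

theorem abs_deriv_sub_slope_le (hab : a < b) (hx : x ∈ Icc a b)
    (hu : ∀ t ∈ Icc a b, HasDerivWithinAt u (u' t) (Icc a b) t)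
    (hu' : ∀ t ∈ Icc a b, HasDerivWithinAt u' (u'' t) (Icc a b) t)
    (hM : ∀ t ∈ Icc a b, |u'' t| ≤ M) :
    |u' x - (u b - u a) / (b - a)| ≤ M * (b - a) / 2 := by
  have hSa := abs_taylor_remainder₁_le hu hu' hM hx (left_mem_Icc.2 hab.le)
  have hSb := abs_taylor_remainder₁_le hu hu' hM hx (right_mem_Icc.2 hab.le)
  have hM0 : 0 ≤ M := (abs_nonneg _).trans (hM x hx)
  have hba : 0 < b - a := sub_pos.2 hab
  have key : u' x - (u b - u a) / (b - a) = -((u b - u x - u' x * (b - x))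
      - (u a - u x - u' x * (a - x))) / (b - a) := by
    field_simp; ring
  rw [key, abs_div, abs_neg, abs_of_pos hba, div_le_iff₀ hba]
  calc _ ≤ M * (b - x) ^ 2 / 2 + M * (a - x) ^ 2 / 2 := (abs_sub _ _).trans (add_le_add hSb hSa)
    _ ≤ M * (b - a) / 2 * (b - a) := by
        nlinarith [mul_nonneg (mul_nonneg hM0 (sub_nonneg.2 hx.1)) (sub_nonneg.2 hx.2)]

theorem abs_sub_linInterp_sub_bubble_le (hab : a < b) (hx : x ∈ Icc a b)
    (hu : ∀ t ∈ Icc a b, HasDerivWithinAt u (u' t) (Icc a b) t)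
    (hu' : ∀ t ∈ Icc a b, HasDerivWithinAt u' (u'' t) (Icc a b) t)
    (hu'' : ∀ t ∈ Icc a b, HasDerivWithinAt u'' (u''' t) (Icc a b) t)
    (hM : ∀ t ∈ Icc a b, |u''' t| ≤ M) :
    |u x - linInterp u a b x - (x - a) * (x - b) / 2 * u'' x| ≤ M * (b - a) ^ 3 / 48 := by
  have hRa := abs_taylor_remainder₂_le hu hu' hu'' hM hx (left_mem_Icc.2 hab.le)
  have hRb := abs_taylor_remainder₂_le hu hu' hu'' hM hx (right_mem_Icc.2 hab.le)
  have hM0 : 0 ≤ M := (abs_nonneg _).trans (hM x hx)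
  have hp : 0 ≤ x - a := sub_nonneg.2 hx.1
  have hr : 0 ≤ b - x := sub_nonneg.2 hx.2
  have hba : 0 < b - a := sub_pos.2 hab
  rw [abs_sub_comm a, abs_of_nonneg hp] at hRa
  rw [abs_of_nonneg hr] at hRb
  have key : u x - linInterp u a b x - (x - a) * (x - b) / 2 * u'' x =
      -((b - x) * (u a - u x - u' x * (a - x) - u'' x * (a - x) ^ 2 / 2)
        + (x - a) * (u b - u x - u' x * (b - x) - u'' x * (b - x) ^ 2 / 2)) / (b - a) := by
    unfold linInterp; field_simp; ring
  rw [key, abs_div, abs_neg, abs_of_pos hba, div_le_iff₀ hba]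
  calc _ ≤ (b - x) * (M * (x - a) ^ 3 / 6) + (x - a) * (M * (b - x) ^ 3 / 6) := by
        refine (abs_add_le _ _).trans ?_
        rw [abs_mul, abs_mul, abs_of_nonneg hp, abs_of_nonneg hr]
        gcongr
    _ ≤ M * (b - a) ^ 3 / 48 * (b - a) := by
        nlinarith [mul_nonneg hM0 (sq_nonneg ((x - a - (b - x)) ^ 2))]

end Interpolation

theorem abs_le_iSup_abs_of_continuousOn {α : Type*} [TopologicalSpace α] {s : Set α}
    {g : α → ℝ} (hs : IsCompact s) (hg : ContinuousOn g s) {t : α} (ht : t ∈ s) :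
    |g t| ≤ ⨆ r : s, |g r| := by
  have hbdd := hs.bddAbove_image hg.abs
  rw [image_eq_range] at hbdd
  exact le_ciSup hbdd ⟨t, ht⟩

section ModifiedInterpolant

variable {a b x : ℝ} {β β' q f u u' u'' u''' : ℝ → ℝ}

theorem sub_modifiedInterp_eq (hβ : β x ≠ 0)
    (hode : β x * u'' x + β' x * u' x - q x * u x + f x = 0) :
    u x - modifiedInterp β β' q f u a b x =
      (u x - linInterp u a b x - (x - a) * (x - b) / 2 * u'' x)
        + (x - a) * (x - b) / (2 * β x)
          * (q x * (u x - linInterp u a b x) - β' x * (u' x - (u b - u a) / (b - a))) := by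
  have hf : f x = q x * u x - β x * u'' x - β' x * u' x := by linarith
  unfold modifiedInterp
  rw [hf]
  field_simp
  ring

theorem abs_sub_modifiedInterp_le {β₀ M₃ M₂ Mq Mβ : ℝ} (hab : a < b) (hx : x ∈ Icc a b)
    (hβ₀ : 0 < β₀) (hβx : β₀ ≤ β x) (hqx : |q x| ≤ Mq) (hβ'x : |β' x| ≤ Mβ)
    (hu : ∀ t ∈ Icc a b, HasDerivWithinAt u (u' t) (Icc a b) t)
    (hu' : ∀ t ∈ Icc a b, HasDerivWithinAt u' (u'' t) (Icc a b) t)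
    (hu'' : ∀ t ∈ Icc a b, HasDerivWithinAt u'' (u''' t) (Icc a b) t)
    (hM₃ : ∀ t ∈ Icc a b, |u''' t| ≤ M₃) (hM₂ : ∀ t ∈ Icc a b, |u'' t| ≤ M₂)
    (hode : β x * u'' x + β' x * u' x - q x * u x + f x = 0) :
    |u x - modifiedInterp β β' q f u a b x|
      ≤ (b - a) ^ 3 / 8 * (M₃ + Mβ / β₀ * M₂) + (b - a) ^ 4 / 64 * (Mq / β₀) * M₂ := by
  have hβ : 0 < β x := hβ₀.trans_le hβx
  have hba : 0 < b - a := sub_pos.2 hab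
  have hM₃0 : 0 ≤ M₃ := (abs_nonneg _).trans (hM₃ x hx)
  have hM₂0 : 0 ≤ M₂ := (abs_nonneg _).trans (hM₂ x hx)
  have hMq0 : 0 ≤ Mq := (abs_nonneg _).trans hqx
  have hMβ0 : 0 ≤ Mβ := (abs_nonneg _).trans hβ'x
  have hE := abs_sub_linInterp_sub_bubble_le hab hx hu hu' hu'' hM₃
  have he := abs_sub_linInterp_le hab hx hu hu' hM₂
  have he' := abs_deriv_sub_slope_le hab hx hu hu' hM₂
  have hP : |(x - a) * (x - b) / (2 * β x)| ≤ (b - a) ^ 2 / (8 * β₀) := by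
    rw [abs_div, abs_of_pos (by positivity : 0 < 2 * β x), div_le_div_iff₀ (by positivity)
      (by positivity), abs_mul, abs_of_nonneg (sub_nonneg.2 hx.1), abs_sub_comm,
      abs_of_nonneg (sub_nonneg.2 hx.2)]
    nlinarith [sq_nonneg (x - a - (b - x)), mul_nonneg (sub_nonneg.2 hx.1) (sub_nonneg.2 hx.2)]
  have hT : |q x * (u x - linInterp u a b x) - β' x * (u' x - (u b - u a) / (b - a))|
      ≤ Mq * (M₂ * (b - a) ^ 2 / 8) + Mβ * (M₂ * (b - a) / 2) := by
    refine (abs_sub _ _).trans ?_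
    rw [abs_mul, abs_mul]
    gcongr
  rw [sub_modifiedInterp_eq hβ.ne' hode]
  calc _ ≤ M₃ * (b - a) ^ 3 / 48
          + (b - a) ^ 2 / (8 * β₀) * (Mq * (M₂ * (b - a) ^ 2 / 8) + Mβ * (M₂ * (b - a) / 2)) := by
        refine (abs_add_le _ _).trans ?_
        rw [abs_mul]
        gcongr
    _ = (b - a) ^ 3 / 48 * M₃ + (b - a) ^ 3 / 16 * (Mβ / β₀ * M₂)
          + (b - a) ^ 4 / 64 * (Mq / β₀) * M₂ := by
        field_simp
        ring
    _ ≤ _ := by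
        have : 0 ≤ (b - a) ^ 3 * M₃ := by positivity
        have : 0 ≤ (b - a) ^ 3 * (Mβ / β₀ * M₂) := by positivity
        linarith

end ModifiedInterpolant

theorem modified_interpolant_third_order_general
    (a b β₀ : ℝ) (hab : a < b) (hβ₀ : 0 < β₀)
    (β β' q f u u' u'' u''' : ℝ → ℝ)
    (hβ'c : ContinuousOn β' (Set.Icc a b))
    (hβlb : ∀ x ∈ Set.Icc a b, β₀ ≤ β x)
    (hq : ContinuousOn q (Set.Icc a b))
    (hu' : ∀ x ∈ Set.Icc a b, HasDerivWithinAt u (u' x) (Set.Icc a b) x)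
    (hu'' : ∀ x ∈ Set.Icc a b, HasDerivWithinAt u' (u'' x) (Set.Icc a b) x)
    (hu''' : ∀ x ∈ Set.Icc a b, HasDerivWithinAt u'' (u''' x) (Set.Icc a b) x)
    (hu'''c : ContinuousOn u''' (Set.Icc a b))
    (hode : ∀ x ∈ Set.Icc a b, β x * u'' x + β' x * u' x - q x * u x + f x = 0) :
    ∀ x ∈ Set.Icc a b,
      |u x - ((u a * (b - x) / (b - a) + u b * (x - a) / (b - a))
          - β' x / (2 * β x) * (x - a) * (x - b) * ((u b - u a) / (b - a))
          + q x / (2 * β x) * (x - a) * (x - b)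
            * (u a * (b - x) / (b - a) + u b * (x - a) / (b - a))
          - f x / (2 * β x) * (x - a) * (x - b))|
        ≤ (b - a) ^ 3 / 8 * ((⨆ t : Set.Icc a b, |u''' t|)
              + (⨆ t : Set.Icc a b, |β' t|) / β₀ * (⨆ t : Set.Icc a b, |u'' t|))
          + (b - a) ^ 4 / 64 * ((⨆ t : Set.Icc a b, |q t|) / β₀)
            * (⨆ t : Set.Icc a b, |u'' t|) := by
  intro x hx
  have hu''c : ContinuousOn u'' (Icc a b) := fun t ht => (hu''' t ht).continuousWithinAt
  exact abs_sub_modifiedInterp_le hab hx hβ₀ (hβlb x hx)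
    (abs_le_iSup_abs_of_continuousOn isCompact_Icc hq hx)
    (abs_le_iSup_abs_of_continuousOn isCompact_Icc hβ'c hx) hu' hu'' hu'''
    (fun t ht => abs_le_iSup_abs_of_continuousOn isCompact_Icc hu'''c ht)
    (fun t ht => abs_le_iSup_abs_of_continuousOn isCompact_Icc hu''c ht) (hode x hx)

/-- For the Sturm–Liouville equation `β u'' + β' u' − q u + f = 0` on `[a,b]`
with `β ≥ β₀ > 0` and `u` three times continuously differentiable, the modified
(bubble-corrected) interpolant
`v x = u_I x − (β' x/(2 β x))(x−a)(x−b)(u b − u a)/(b−a)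
      + (q x/(2 β x))(x−a)(x−b) u_I x − (f x/(2 β x))(x−a)(x−b)`
(where `u_I` is the linear interpolant of `u` on `[a,b]`) satisfies
`|u x − v x| ≤ ((b−a)³/8)(sup|u'''| + (sup|β'|/β₀) sup|u''|)
             + ((b−a)⁴/64)(sup|q|/β₀) sup|u''|`. -/
theorem modified_interpolant_third_order
    (a b β₀ : ℝ) (hab : a < b) (hβ₀ : 0 < β₀)
    (β β' q f u u' u'' u''' : ℝ → ℝ)
    (hβd : ∀ x ∈ Set.Icc a b, HasDerivWithinAt β (β' x) (Set.Icc a b) x)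
    (hβ'c : ContinuousOn β' (Set.Icc a b))
    (hβlb : ∀ x ∈ Set.Icc a b, β₀ ≤ β x)
    (hq : ContinuousOn q (Set.Icc a b))
    (hf : ContinuousOn f (Set.Icc a b))
    (hu' : ∀ x ∈ Set.Icc a b, HasDerivWithinAt u (u' x) (Set.Icc a b) x)
    (hu'' : ∀ x ∈ Set.Icc a b, HasDerivWithinAt u' (u'' x) (Set.Icc a b) x)
    (hu''' : ∀ x ∈ Set.Icc a b, HasDerivWithinAt u'' (u''' x) (Set.Icc a b) x)
    (hu'''c : ContinuousOn u''' (Set.Icc a b))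
    (hode : ∀ x ∈ Set.Icc a b, β x * u'' x + β' x * u' x - q x * u x + f x = 0) :
    ∀ x ∈ Set.Icc a b,
      |u x - ((u a * (b - x) / (b - a) + u b * (x - a) / (b - a))
          - β' x / (2 * β x) * (x - a) * (x - b) * ((u b - u a) / (b - a))
          + q x / (2 * β x) * (x - a) * (x - b)
            * (u a * (b - x) / (b - a) + u b * (x - a) / (b - a))
          - f x / (2 * β x) * (x - a) * (x - b))|
        ≤ (b - a) ^ 3 / 8 * ((⨆ t : Set.Icc a b, |u''' t|)
              + (⨆ t : Set.Icc a b, |β' t|) / β₀ * (⨆ t : Set.Icc a b, |u'' t|))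
          + (b - a) ^ 4 / 64 * ((⨆ t : Set.Icc a b, |q t|) / β₀)
            * (⨆ t : Set.Icc a b, |u'' t|) :=
  modified_interpolant_third_order_general a b β₀ hab hβ₀ β β' q f u u' u'' u''' hβ'c hβlb hq hu'
    hu'' hu''' hu'''c hode
end
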